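/- arXiv:1706.06854 — 6 statements merged into one kernel-verified Lean document; each statement's English description precedes it below -/
import Mathlib

section
/- Let n ≥ 2 and let Q(z) = 1 + c₁z + c₂z² + ⋯ + c_{n-1}z^{n-1} + zⁿ be a complex polynomial (with c₁, …, c_{n-1} ∈ ℂ). If Re Q(z) > 0 for all z in the open unit disk 𝔻, then c₁ = c₂ = ⋯ = c_{n-1} = 0. -/
/-!
Let `ζ` run over the `n` roots of `zⁿ = -1`. As `deg Q ≤ n`, the power sums `∑ ζᵏ` with
`0 < k < n` vanish, so `∑ Q(ζ) = n (Q₀ - Qₙ) = 0`; since `Re Q ≥ 0` on the unit circle (the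
closure of the disk), `Re Q` vanishes at every `ζ`, and these are minima of `Re Q` on the
circle. The polynomial `S(z) = zⁿ Q(z) + zⁿ Q̄(1/z)` of degree `≤ 2n` equals `2 zⁿ Re Q(z)` on
the circle, so it has a double root at every `ζ`. Hence `(zⁿ + 1)² ∣ S`, so `S` is a constant
multiple of `(zⁿ + 1)²`, and the coefficient `c_k` of `z^(n+k)` in `S` is zero.
-/

open Polynomial Finset Complex ComplexConjugate

lemma re_eval_nonneg_of_norm_eq_one {Q : ℂ[X]}
    (hpos : ∀ z : ℂ, ‖z‖ < 1 → 0 < (Q.eval z).re) {z : ℂ} (hz : ‖z‖ = 1) : 0 ≤ (Q.eval z).re := by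
  have hclosed : IsClosed {w : ℂ | 0 ≤ (Q.eval w).re} :=
    isClosed_le continuous_const (continuous_re.comp Q.continuous)
  have hball : Metric.ball (0 : ℂ) 1 ⊆ {w | 0 ≤ (Q.eval w).re} := fun w hw =>
    (hpos w (mem_ball_zero_iff.mp hw)).le
  apply closure_minimal hball hclosed
  rw [closure_ball 0 one_ne_zero]
  exact mem_closedBall_zero_iff.mpr hz.le

/-- `zⁿ Q(z) + zⁿ Q̄(1/z)`, with `Q̄` the conjugate-coefficient polynomial; on the unit circle
it is `2 zⁿ Re Q(z)`. -/
noncomputable def rePoly (n : ℕ) (Q : ℂ[X]) : ℂ[X] :=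
  X ^ n * Q + reflect n (Q.map (starRingEnd ℂ))

lemma eval_rePoly {n : ℕ} {Q : ℂ[X]} (hQ : Q.natDegree ≤ n) {z : ℂ} (hz : ‖z‖ = 1) :
    (rePoly n Q).eval z = z ^ n * (2 * (Q.eval z).re : ℝ) := by
  have hconj : conj z = z⁻¹ := (inv_eq_conj hz).symm
  have hz0 : z ≠ 0 := norm_ne_zero_iff.mp (by simp [hz])
  let := invertibleOfNonzero (inv_ne_zero hz0)
  have hrefl := eval₂_reflect_mul_pow (RingHom.id ℂ) z⁻¹ n (Q.map (starRingEnd ℂ))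
    (by rwa [natDegree_map])
  rw [eval₂_id, eval₂_id, invOf_eq_inv, inv_inv, ← hconj, eval_map_apply] at hrefl
  have hrefl' : (reflect n (Q.map (starRingEnd ℂ))).eval z = z ^ n * conj (Q.eval z) := by
    rw [← hrefl, hconj, inv_pow]
    field_simp
  rw [rePoly, eval_add, eval_mul, eval_pow, eval_X, hrefl', ← mul_add, add_conj]

lemma hasDerivAt_exp_ofReal_mul_I (t : ℝ) :
    HasDerivAt (fun s : ℝ => exp (s * I)) (exp (t * I) * I) t := by
  simpa using ((hasDerivAt_id t).ofReal_comp.mul_const I).cexp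

lemma isRoot_derivative_rePoly {n : ℕ} {Q : ℂ[X]} (hQ : Q.natDegree ≤ n)
    (hnn : ∀ z : ℂ, ‖z‖ = 1 → 0 ≤ (Q.eval z).re) {ζ : ℂ} (hζ : ‖ζ‖ = 1)
    (h0 : (Q.eval ζ).re = 0) : (derivative (rePoly n Q)).IsRoot ζ := by
  obtain ⟨θ, rfl⟩ := (norm_eq_one_iff ζ).mp hζ
  set u : ℝ → ℝ := fun t => (Q.eval (exp (t * I))).re
  have hu_min : IsLocalMin u θ :=
    Filter.Eventually.of_forall fun t => by
      rw [show u θ = 0 from h0]; exact hnn _ (norm_exp_ofReal_mul_I t)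
  have hu : HasDerivAt u 0 θ := by
    have hd : DifferentiableAt ℝ u θ :=
      (reCLM.hasFDerivAt.comp_hasDerivAt θ
        ((Q.hasDerivAt _).comp θ (hasDerivAt_exp_ofReal_mul_I θ))).differentiableAt
    simpa [hu_min.deriv_eq_zero] using hd.hasDerivAt
  -- differentiate `rePoly n Q (e^{it}) = e^{int} · 2 u(t)` at the minimum `θ` of `u`
  have hlhs := ((rePoly n Q).hasDerivAt _).comp θ (hasDerivAt_exp_ofReal_mul_I θ)
  have hrhs : HasDerivAt (fun t : ℝ => exp (t * I) ^ n * ((2 * u t : ℝ) : ℂ)) 0 θ := by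
    simpa [u, h0] using
      ((hasDerivAt_exp_ofReal_mul_I θ).fun_pow n).fun_mul (hu.const_mul 2).ofReal_comp
  have heq : (fun t : ℝ => (rePoly n Q).eval (exp (t * I))) =
      fun t : ℝ => exp (t * I) ^ n * ((2 * u t : ℝ) : ℂ) :=
    funext fun t : ℝ => eval_rePoly hQ (norm_exp_ofReal_mul_I t)
  rw [Function.comp_def, heq] at hlhs
  simpa [IsRoot, exp_ne_zero, I_ne_zero] using hlhs.unique hrhs

lemma sq_X_sub_C_dvd_rePoly {n : ℕ} {Q : ℂ[X]} (hQ : Q.natDegree ≤ n)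
    (hnn : ∀ z : ℂ, ‖z‖ = 1 → 0 ≤ (Q.eval z).re) {ζ : ℂ} (hζ : ‖ζ‖ = 1)
    (h0 : (Q.eval ζ).re = 0) : (X - C ζ) ^ 2 ∣ rePoly n Q := by
  by_cases hS : rePoly n Q = 0
  · rw [hS]
    exact dvd_zero _
  rw [← le_rootMultiplicity_iff hS]
  exact (one_lt_rootMultiplicity_iff_isRoot hS).mpr
    ⟨by simp [IsRoot, eval_rePoly hQ hζ, h0], isRoot_derivative_rePoly hQ hnn hζ h0⟩

lemma coeff_rePoly_add {n : ℕ} {Q : ℂ[X]} (hQ : Q.natDegree ≤ n) {k : ℕ} (hk : 0 < k) :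
    (rePoly n Q).coeff (n + k) = Q.coeff k := by
  have hrefl : (reflect n (Q.map (starRingEnd ℂ))).coeff (n + k) = 0 := by
    rw [coeff_reflect, revAt_eq_self_of_lt (by omega), coeff_map,
      coeff_eq_zero_of_natDegree_lt (by omega), map_zero]
  rw [rePoly, coeff_add, hrefl, add_zero, add_comm, coeff_X_pow_mul]

lemma natDegree_rePoly_le {n : ℕ} {Q : ℂ[X]} (hQ : Q.natDegree ≤ n) :
    (rePoly n Q).natDegree ≤ 2 * n := by
  refine natDegree_add_le_of_degree_le ?_ ?_
  · exact natDegree_mul_le.trans (by rw [natDegree_X_pow]; omega)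
  · exact natDegree_reflect_le.trans (by rw [natDegree_map]; omega)

section RootsOfNegOne

variable {R : Type*} [CommRing R] {n : ℕ} {ω ξ : R}

lemma X_pow_add_one_eq_prod [IsDomain R] (hn : 0 < n) (hω : IsPrimitiveRoot ω n)
    (hξ : ξ ^ n = -1) :
    X ^ n + 1 = ∏ i ∈ range n, (X - C (ω ^ i * ξ)) := by
  simpa [sub_eq_add_neg] using X_pow_sub_C_eq_prod hω hn hξ

lemma sum_pow_mul_pow_eq_zero [IsDomain R] (hω : IsPrimitiveRoot ω n) (ξ : R) {k : ℕ}
    (hk0 : 0 < k) (hkn : k < n) : ∑ i ∈ range n, (ω ^ i * ξ) ^ k = 0 := by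
  have hωk : ω ^ k ≠ 1 := hω.pow_ne_one_of_pos_of_lt hk0.ne' hkn
  have hgeom : (∑ i ∈ range n, (ω ^ k) ^ i) * (ω ^ k - 1) = 0 := by
    rw [geom_sum_mul, ← pow_mul, mul_comm, pow_mul, hω.pow_eq_one, one_pow, sub_self]
  have hsum : ∑ i ∈ range n, (ω ^ k) ^ i = 0 :=
    (mul_eq_zero.mp hgeom).resolve_right (sub_ne_zero.mpr hωk)
  simp_rw [mul_pow, ← pow_mul, mul_comm _ k, pow_mul, ← sum_mul, hsum, zero_mul]

lemma pow_mul_pow_eq_neg_one (hω : IsPrimitiveRoot ω n) (hξ : ξ ^ n = -1) (i : ℕ) :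
    (ω ^ i * ξ) ^ n = -1 := by
  rw [mul_pow, ← pow_mul, mul_comm i, pow_mul, hω.pow_eq_one, one_pow, one_mul, hξ]

lemma sum_eval_pow_mul [IsDomain R] (hn : 0 < n) (hω : IsPrimitiveRoot ω n)
    (hξ : ξ ^ n = -1) {Q : R[X]} (hQ : Q.natDegree ≤ n) :
    ∑ i ∈ range n, Q.eval (ω ^ i * ξ) = n * (Q.coeff 0 - Q.coeff n) := by
  simp_rw [eval_eq_sum_range' (Nat.lt_succ_of_le hQ)]
  obtain ⟨m, rfl⟩ := Nat.exists_eq_succ_of_ne_zero hn.ne'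
  rw [sum_comm, sum_range_succ, sum_range_succ']
  simp_rw [← mul_sum, pow_mul_pow_eq_neg_one hω hξ]
  rw [sum_eq_zero fun k hk => by
    rw [sum_pow_mul_pow_eq_zero hω ξ k.succ_pos (by simpa using hk), mul_zero]]
  simp only [pow_zero, sum_const, card_range, nsmul_eq_mul]
  push_cast
  ring

lemma coeff_X_pow_add_one_sq_of_lt {k : ℕ} (hk0 : 0 < k) (hkn : k < n) :
    ((X ^ n + 1) ^ 2 : R[X]).coeff (n + k) = 0 := by
  rw [show ((X ^ n + 1) ^ 2 : R[X]) = X ^ (2 * n) + C 2 * X ^ n + 1 by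
    rw [map_ofNat]; ring]
  simp only [coeff_add, coeff_X_pow, coeff_C_mul_X_pow, coeff_one]
  rw [if_neg (by omega), if_neg (by omega), if_neg (by omega), add_zero, add_zero]

end RootsOfNegOne

lemma sq_X_pow_add_one_dvd_rePoly {n : ℕ} (hn : 0 < n) {Q : ℂ[X]} (hQ : Q.natDegree ≤ n)
    (hnn : ∀ z : ℂ, ‖z‖ = 1 → 0 ≤ (Q.eval z).re) (hre : (Q.coeff n).re = (Q.coeff 0).re) :
    (X ^ n + 1) ^ 2 ∣ rePoly n Q := by
  obtain ⟨ω, hω⟩ : ∃ ω : ℂ, IsPrimitiveRoot ω n := ⟨_, isPrimitiveRoot_exp n hn.ne'⟩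
  obtain ⟨ξ, hξ⟩ := IsAlgClosed.exists_pow_nat_eq (-1 : ℂ) hn
  have hξ0 : ξ ≠ 0 := by
    rintro rfl
    simp [zero_pow hn.ne'] at hξ
  have hnorm : ∀ i, ‖ω ^ i * ξ‖ = 1 := fun i =>
    norm_eq_one_of_pow_eq_one (n := n * 2)
      (by rw [pow_mul, pow_mul_pow_eq_neg_one hω hξ, neg_one_sq]) (by omega)
  have hre0 : ∀ i ∈ range n, (Q.eval (ω ^ i * ξ)).re = 0 := by
    have hsum : ∑ i ∈ range n, (Q.eval (ω ^ i * ξ)).re = 0 := by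
      rw [← re_sum, sum_eval_pow_mul hn hω hξ hQ]
      simp [hre]
    exact (sum_eq_zero_iff_of_nonneg fun i _ => hnn _ (hnorm i)).mp hsum
  rw [X_pow_add_one_eq_prod hn hω hξ, ← prod_pow]
  refine prod_dvd_of_coprime (fun i hi j hj hij => ?_)
    fun i hi => sq_X_sub_C_dvd_rePoly hQ hnn (hnorm i) (hre0 i hi)
  exact (isCoprime_X_sub_C_of_isUnit_sub
    (sub_ne_zero.mpr fun h => hij (hω.injOn_pow_mul hξ0 hi hj h)).isUnit).pow

theorem coeff_eq_zero_of_re_eval_nonneg {n : ℕ} {Q : ℂ[X]} (hQ : Q.natDegree ≤ n)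
    (hnn : ∀ z : ℂ, ‖z‖ = 1 → 0 ≤ (Q.eval z).re) (hre : (Q.coeff n).re = (Q.coeff 0).re)
    {k : ℕ} (hk0 : 0 < k) (hkn : k < n) : Q.coeff k = 0 := by
  have hn : 0 < n := hk0.trans hkn
  have hmonic : ((X ^ n + 1 : ℂ[X]) ^ 2).Monic := (monic_X_pow_add_C 1 hn.ne').pow 2
  have hdeg : ((X ^ n + 1 : ℂ[X]) ^ 2).natDegree = 2 * n := by
    rw [natDegree_pow, ← C_1, natDegree_X_pow_add_C, mul_comm]
  have hS := eq_mul_leadingCoeff_of_monic_of_dvd_of_natDegree_le hmonic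
    (sq_X_pow_add_one_dvd_rePoly hn hQ hnn hre) ((natDegree_rePoly_le hQ).trans hdeg.ge)
  rw [← coeff_rePoly_add hQ hk0, hS, coeff_mul_C, coeff_X_pow_add_one_sq_of_lt hk0 hkn, zero_mul]

theorem middle_coeffs_vanish_of_pos_re_general (n : ℕ) (c : ℕ → ℂ)
    (Q : Polynomial ℂ)
    (hQ : Q = C 1 + (∑ k ∈ Finset.Icc 1 (n - 1), C (c k) * X ^ k) + X ^ n)
    (hpos : ∀ z : ℂ, ‖z‖ < 1 → 0 < (Q.eval z).re) :
    ∀ k ∈ Finset.Icc 1 (n - 1), c k = 0 := by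
  intro k hk
  obtain ⟨hk1, hkn⟩ := mem_Icc.mp hk
  have hcoeff : ∀ j, Q.coeff j = (if j = 0 then 1 else 0) +
      (if j ∈ Icc 1 (n - 1) then c j else 0) + (if j = n then 1 else 0) := by
    simp only [hQ, coeff_add, coeff_C, finsetSum_coeff, coeff_C_mul_X_pow, coeff_X_pow,
      sum_ite_eq, implies_true]
  have hdeg : Q.natDegree ≤ n := natDegree_le_iff_coeff_eq_zero.mpr fun j hj => by
    rw [hcoeff, if_neg (by omega), if_neg (by simp; omega), if_neg (by omega), add_zero,
      add_zero]
  have hre : (Q.coeff n).re = (Q.coeff 0).re := by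
    rw [hcoeff, hcoeff, if_neg (by omega), if_neg (by simp; omega), if_pos rfl, if_pos rfl,
      if_neg (by simp), if_neg (by omega)]
    norm_num
  have hk_coeff : Q.coeff k = c k := by
    rw [hcoeff, if_neg (by omega), if_pos hk, if_neg (by omega), zero_add, add_zero]
  rw [← hk_coeff]
  exact coeff_eq_zero_of_re_eval_nonneg hdeg (fun _ => re_eval_nonneg_of_norm_eq_one hpos) hre
    hk1 (by omega)

/-- If `n ≥ 2` and `Q(z) = 1 + c₁ z + ⋯ + c_{n-1} z^{n-1} + zⁿ` has positive real part on
the open unit disk, then all the middle coefficients vanish. -/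
theorem middle_coeffs_vanish_of_pos_re (n : ℕ) (hn : 2 ≤ n) (c : ℕ → ℂ)
    (Q : Polynomial ℂ)
    (hQ : Q = C 1 + (∑ k ∈ Finset.Icc 1 (n - 1), C (c k) * X ^ k) + X ^ n)
    (hpos : ∀ z : ℂ, ‖z‖ < 1 → 0 < (Q.eval z).re) :
    ∀ k ∈ Finset.Icc 1 (n - 1), c k = 0 :=
  middle_coeffs_vanish_of_pos_re_general n c Q hQ hpos
end

section
/- Let n ≥ 2 and let Q(z) = 1 + c₁z + c₂z² + ⋯ + c_{n-1}z^{n-1} + zⁿ be a complex polynomial (with c₁, …, c_{n-1} ∈ ℂ) such that Re Q(z) > 0 for all z in the open unit disk 𝔻. Then Re Q(ω) = 0 for every ω ∈ ℂ satisfying ωⁿ = −1. -/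
/-!
Let `ζ` be a primitive `n`-th root of unity. Averaging `Q` over the orbit `ω ζ^j` kills every
monomial whose degree is not divisible by `n`, so `∑ⱼ Q(ω ζʲ) = n (1 + ωⁿ) = 0`. All the points
`ω ζʲ` lie on the unit circle, where `Re Q ≥ 0` by continuity; a sum of nonnegative reals that
vanishes has vanishing terms, in particular `Re Q(ω) = 0`.
-/

open Polynomial Finset

lemma Complex.norm_eq_one_of_pow_eq_neg_one {ω : ℂ} {n : ℕ} (h : ω ^ n = -1) : ‖ω‖ = 1 := by
  refine Complex.norm_eq_one_of_pow_eq_one (n := 2 * n) (by rw [pow_mul', h, neg_one_sq]) ?_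
  rintro hn
  norm_num [show n = 0 by omega] at h

lemma Continuous.nonneg_of_forall_mem_ball_pos {E : Type*} [NormedAddCommGroup E]
    [NormedSpace ℝ E] {f : E → ℝ} (hf : Continuous f) {x : E} {r : ℝ} (hr : r ≠ 0)
    (hpos : ∀ z ∈ Metric.ball x r, 0 < f z) {z : E} (hz : z ∈ Metric.closedBall x r) :
    0 ≤ f z := by
  rw [← closure_ball x hr] at hz
  exact closure_minimal (fun w hw => (hpos w hw).le) (isClosed_le continuous_const hf) hz

namespace IsPrimitiveRoot

variable {R : Type*} [CommRing R] [IsDomain R] {ζ : R} {n : ℕ}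

lemma sum_mul_pow_pow_eq_zero (hζ : IsPrimitiveRoot ζ n) (ω : R) {k : ℕ} (hk : ¬ n ∣ k) :
    ∑ j ∈ range n, (ω * ζ ^ j) ^ k = 0 := by
  have hne : ζ ^ k ≠ 1 := mt (hζ.pow_eq_one_iff_dvd k).mp hk
  have hgeom : ∑ j ∈ range n, (ζ ^ k) ^ j = 0 := by
    have h := geom_sum_mul (ζ ^ k) n
    rw [← pow_mul, mul_comm k, pow_mul, hζ.pow_eq_one, one_pow, sub_self] at h
    exact (mul_eq_zero.mp h).resolve_right (sub_ne_zero.mpr hne)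
  simp_rw [mul_pow, ← pow_mul, mul_comm _ k, pow_mul, ← mul_sum, hgeom, mul_zero]

lemma sum_eval_mul_pow_eq_zero (hζ : IsPrimitiveRoot ζ n) (c : ℕ → R) {ω : R}
    (hω : ω ^ n = -1) :
    ∑ j ∈ range n, (C 1 + (∑ k ∈ Icc 1 (n - 1), C (c k) * X ^ k) + X ^ n).eval (ω * ζ ^ j)
      = 0 := by
  have hmiddle : ∀ k ∈ Icc 1 (n - 1), ¬ n ∣ k := fun k hk hdvd => by
    rw [mem_Icc] at hk
    exact absurd (Nat.le_of_dvd (by omega) hdvd) (by omega)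
  have hedge : ∀ j, 1 + (ω * ζ ^ j) ^ n = 0 := fun j => by
    rw [mul_pow, ← pow_mul, mul_comm j, pow_mul, hζ.pow_eq_one, one_pow, hω]; ring
  simp only [eval_add, eval_C, eval_finsetSum, eval_mul, eval_pow, eval_X]
  calc ∑ j ∈ range n, (1 + ∑ k ∈ Icc 1 (n - 1), c k * (ω * ζ ^ j) ^ k + (ω * ζ ^ j) ^ n)
      = ∑ k ∈ Icc 1 (n - 1), c k * ∑ j ∈ range n, (ω * ζ ^ j) ^ k := by
        simp_rw [add_right_comm _ _ ((ω * ζ ^ _) ^ n), hedge, zero_add, mul_sum]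
        exact sum_comm
    _ = 0 := sum_eq_zero fun k hk => by
        rw [hζ.sum_mul_pow_pow_eq_zero ω (hmiddle k hk), mul_zero]

end IsPrimitiveRoot

theorem re_eq_zero_at_roots_of_neg_one_general (n : ℕ) (c : ℕ → ℂ)
    (Q : Polynomial ℂ)
    (hQ : Q = C 1 + (∑ k ∈ Finset.Icc 1 (n - 1), C (c k) * X ^ k) + X ^ n)
    (hpos : ∀ z : ℂ, ‖z‖ < 1 → 0 < (Q.eval z).re) :
    ∀ ω : ℂ, ω ^ n = -1 → (Q.eval ω).re = 0 := by
  intro ω hω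
  have hn : n ≠ 0 := fun h => by norm_num [h] at hω
  obtain ⟨ζ, hζ⟩ : ∃ ζ : ℂ, IsPrimitiveRoot ζ n := ⟨_, Complex.isPrimitiveRoot_exp n hn⟩
  have hnonneg : ∀ j ∈ range n, 0 ≤ (Q.eval (ω * ζ ^ j)).re := fun j _ => by
    refine (Complex.continuous_re.comp Q.continuous).nonneg_of_forall_mem_ball_pos one_ne_zero
      (fun z hz => hpos z (mem_ball_zero_iff.mp hz)) (mem_closedBall_zero_iff.mpr (le_of_eq ?_))
    rw [norm_mul, Complex.norm_eq_one_of_pow_eq_neg_one hω, norm_pow, hζ.norm'_eq_one hn,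
      one_pow, one_mul]
  have hsum : ∑ j ∈ range n, (Q.eval (ω * ζ ^ j)).re = 0 := by
    rw [← Complex.re_sum, hQ, hζ.sum_eval_mul_pow_eq_zero c hω, Complex.zero_re]
  simpa using
    (sum_eq_zero_iff_of_nonneg hnonneg).mp hsum 0 (mem_range.mpr (Nat.pos_of_ne_zero hn))

/-- If `n ≥ 2` and `Q(z) = 1 + c₁ z + ⋯ + c_{n-1} z^{n-1} + zⁿ` has positive real part on
the open unit disk, then `Re Q(ω) = 0` for every `n`-th root of `-1`. -/
theorem re_eq_zero_at_roots_of_neg_one (n : ℕ) (hn : 2 ≤ n) (c : ℕ → ℂ)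
    (Q : Polynomial ℂ)
    (hQ : Q = C 1 + (∑ k ∈ Finset.Icc 1 (n - 1), C (c k) * X ^ k) + X ^ n)
    (hpos : ∀ z : ℂ, ‖z‖ < 1 → 0 < (Q.eval z).re) :
    ∀ ω : ℂ, ω ^ n = -1 → (Q.eval ω).re = 0 :=
  re_eq_zero_at_roots_of_neg_one_general n c Q hQ hpos
end

section
/- Let n ≥ 2 and let P(z) = z + a₂z² + ⋯ + a_{n-1}z^{n-1} + zⁿ/n be a complex polynomial (with a₂, …, a_{n-1} ∈ ℂ). Then Re P′(z) > 0 for all z in the open unit disk 𝔻 if and only if a₂ = a₃ = ⋯ = a_{n-1} = 0. -/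
/-!
Write `P′ = 1 + c₁ z + ⋯ + c_{m-1} z^{m-1} + z^m` with `m = n - 1`; by continuity `Re P′ ≥ 0` on
the unit circle. Fix `v` on the circle and let `z_1, …, z_m` be its `m`-th roots. Summing over the
`z_j` kills every monomial whose degree is not divisible by `m`, so `∑ Re P′(z_j) = m (1 + Re v)`
while, for `0 < k < m`, `∑ 2 Re P′(z_j) z_j^{m-k} = m (c_k v + conj c_{m-k})`. As the weights
`Re P′(z_j)` are nonnegative and `|z_j| = 1`, this gives `|c_k v + conj c_{m-k}| ≤ |1 + v|²`
for all `|v| = 1`. At `v = -1` this forces `conj c_{m-k} = c_k`, and then `|c_k| ≤ |1 + v|`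
with `v → -1` forces `c_k = 0`.
-/

open Polynomial Finset Filter Topology ComplexConjugate

theorem nonneg_on_closedBall_of_pos_on_ball {E : Type*} [NormedAddCommGroup E] [NormedSpace ℝ E]
    {g : E → ℝ} (hg : Continuous g) {x : E} {r : ℝ} (hr : r ≠ 0)
    (h : ∀ z ∈ Metric.ball x r, 0 < g z) : ∀ z ∈ Metric.closedBall x r, 0 ≤ g z := by
  rw [← closure_ball x hr]
  exact (isClosed_le continuous_const hg).closure_subset_iff.2 fun z hz => (h z hz).le

theorem IsPrimitiveRoot.sum_mul_pow_pow {K : Type*} [Field K] {η : K} {m : ℕ}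
    (hη : IsPrimitiveRoot η m) (w : K) (s : ℕ) :
    ∑ j ∈ range m, (w * η ^ j) ^ s = if m ∣ s then m * w ^ s else 0 := by
  simp_rw [mul_pow, ← pow_mul, mul_comm _ s, pow_mul, ← mul_sum]
  split_ifs with h
  · simp [(hη.pow_eq_one_iff_dvd s).2 h, mul_comm]
  · have hne : η ^ s ≠ 1 := fun h' => h ((hη.pow_eq_one_iff_dvd s).1 h')
    rw [geom_sum_eq hne, pow_right_comm, hη.pow_eq_one, one_pow, sub_self, zero_div, mul_zero]

section RootsFilter

variable {K : Type*} [Field K] {p : K[X]} {m : ℕ} {η : K}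

theorem Polynomial.sum_eval_mul_pow_of_isPrimitiveRoot (hdeg : p.natDegree ≤ m)
    (hη : IsPrimitiveRoot η m) (w : K) (s : ℕ) :
    ∑ j ∈ range m, p.eval (w * η ^ j) * (w * η ^ j) ^ s =
      ∑ l ∈ range (m + 1), p.coeff l * if m ∣ l + s then m * w ^ (l + s) else 0 := by
  simp_rw [eval_eq_sum_range' (Nat.lt_succ_of_le hdeg), sum_mul, mul_assoc, ← pow_add]
  rw [sum_comm]
  simp_rw [← mul_sum, hη.sum_mul_pow_pow]

theorem Polynomial.sum_eval_of_isPrimitiveRoot (hdeg : p.natDegree ≤ m) (hm : 0 < m)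
    (hη : IsPrimitiveRoot η m) (w : K) :
    ∑ j ∈ range m, p.eval (w * η ^ j) = m * (p.coeff 0 + p.coeff m * w ^ m) := by
  have h := sum_eval_mul_pow_of_isPrimitiveRoot hdeg hη w 0
  simp only [pow_zero, mul_one, add_zero] at h
  rw [h, sum_range_succ, sum_eq_single 0, if_pos (dvd_zero m), if_pos dvd_rfl, pow_zero]
  · ring
  · intro l hl hl0
    rw [if_neg fun h => hl0 (Nat.eq_zero_of_dvd_of_lt h (mem_range.1 hl)), mul_zero]
  · simp [hm]

theorem Polynomial.sum_eval_mul_pow_of_isPrimitiveRoot_of_lt (hdeg : p.natDegree ≤ m)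
    (hη : IsPrimitiveRoot η m) (w : K) {s : ℕ} (hs0 : 0 < s) (hsm : s < m) :
    ∑ j ∈ range m, p.eval (w * η ^ j) * (w * η ^ j) ^ s = m * p.coeff (m - s) * w ^ m := by
  rw [sum_eval_mul_pow_of_isPrimitiveRoot hdeg hη, sum_eq_single (m - s)]
  · rw [Nat.sub_add_cancel hsm.le, if_pos dvd_rfl]
    ring
  · intro l hl hls
    rw [mem_range] at hl
    rw [if_neg fun h => hls (by have := Nat.eq_of_dvd_of_lt_two_mul (by omega) h (by omega); omega),
      mul_zero]
  · simp

end RootsFilter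

theorem Complex.mul_conj_eq_one {z : ℂ} (hz : ‖z‖ = 1) : z * conj z = 1 := by
  simp [mul_conj', hz]

theorem Complex.pow_sub_eq_pow_mul_conj_pow {z : ℂ} (hz : ‖z‖ = 1) {k m : ℕ} (hkm : k ≤ m) :
    z ^ (m - k) = z ^ m * conj z ^ k := by
  rw [← Nat.sub_add_cancel hkm, pow_add, Nat.sub_add_cancel hkm, mul_assoc, ← mul_pow,
    mul_conj_eq_one hz, one_pow, mul_one]

theorem IsPrimitiveRoot.norm_mul_pow_eq_one {η w : ℂ} {m : ℕ} (hη : IsPrimitiveRoot η m)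
    (hm : m ≠ 0) (hw : ‖w‖ = 1) (j : ℕ) : ‖w * η ^ j‖ = 1 := by
  rw [norm_mul, norm_pow, hη.norm'_eq_one hm, one_pow, mul_one, hw]

theorem Polynomial.sum_two_re_eval_mul_pow_of_isPrimitiveRoot {p : ℂ[X]} {m k : ℕ}
    (hdeg : p.natDegree ≤ m) {η : ℂ} (hη : IsPrimitiveRoot η m) {w : ℂ} (hw : ‖w‖ = 1)
    (hk0 : 0 < k) (hkm : k < m) :
    ∑ j ∈ range m, ((2 * (p.eval (w * η ^ j)).re : ℝ) : ℂ) * (w * η ^ j) ^ (m - k) =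
      m * (p.coeff k * w ^ m + conj (p.coeff (m - k))) := by
  have hz := hη.norm_mul_pow_eq_one (hk0.trans hkm).ne' hw
  have hzm : ∀ j, (w * η ^ j) ^ m = w ^ m := fun j => by
    rw [mul_pow, pow_right_comm, hη.pow_eq_one, one_pow, mul_one]
  have hsplit : ∀ j, ((2 * (p.eval (w * η ^ j)).re : ℝ) : ℂ) * (w * η ^ j) ^ (m - k) =
      p.eval (w * η ^ j) * (w * η ^ j) ^ (m - k) +
        w ^ m * conj (p.eval (w * η ^ j) * (w * η ^ j) ^ k) := fun j => by
    rw [← Complex.add_conj, map_mul, map_pow, Complex.pow_sub_eq_pow_mul_conj_pow (hz j) hkm.le,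
      hzm]
    ring
  simp_rw [hsplit, sum_add_distrib, ← mul_sum, ← map_sum,
    sum_eval_mul_pow_of_isPrimitiveRoot_of_lt hdeg hη w (Nat.sub_pos_of_lt hkm)
      (Nat.sub_lt (hk0.trans hkm) hk0),
    sum_eval_mul_pow_of_isPrimitiveRoot_of_lt hdeg hη w hk0 hkm, Nat.sub_sub_self hkm.le]
  have hwm : ‖w ^ m‖ = 1 := by rw [norm_pow, hw, one_pow]
  simp only [map_mul, map_natCast]
  linear_combination (m * conj (p.coeff (m - k))) * Complex.mul_conj_eq_one hwm

theorem Polynomial.norm_coeff_mul_add_conj_coeff_le {p : ℂ[X]} {m k : ℕ} (hdeg : p.natDegree ≤ m)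
    (hk0 : 0 < k) (hkm : k < m) (hre : ∀ z : ℂ, ‖z‖ = 1 → 0 ≤ (p.eval z).re) {v : ℂ}
    (hv : ‖v‖ = 1) :
    ‖p.coeff k * v + conj (p.coeff (m - k))‖ ≤ 2 * (p.coeff 0 + p.coeff m * v).re := by
  have hm : 0 < m := hk0.trans hkm
  obtain ⟨w, rfl⟩ := IsAlgClosed.exists_pow_nat_eq v hm
  have hw : ‖w‖ = 1 := by
    rwa [← pow_eq_one_iff_of_nonneg (norm_nonneg w) hm.ne', ← norm_pow]
  have hη := Complex.isPrimitiveRoot_exp m hm.ne'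
  set η := Complex.exp (2 * Real.pi * Complex.I / m)
  have hz := hη.norm_mul_pow_eq_one hm.ne' hw
  have hre_sum := congrArg Complex.re (sum_eval_of_isPrimitiveRoot hdeg hm hη w)
  rw [Complex.re_sum, ← Complex.ofReal_natCast, Complex.re_ofReal_mul] at hre_sum
  have hbound : m * ‖p.coeff k * w ^ m + conj (p.coeff (m - k))‖ ≤
      m * (2 * (p.coeff 0 + p.coeff m * w ^ m).re) :=
    calc _ = ‖∑ j ∈ range m, ((2 * (p.eval (w * η ^ j)).re : ℝ) : ℂ) * (w * η ^ j) ^ (m - k)‖ := by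
          rw [sum_two_re_eval_mul_pow_of_isPrimitiveRoot hdeg hη hw hk0 hkm, norm_mul,
            Complex.norm_natCast]
      _ ≤ ∑ j ∈ range m, ‖((2 * (p.eval (w * η ^ j)).re : ℝ) : ℂ) * (w * η ^ j) ^ (m - k)‖ :=
          norm_sum_le _ _
      _ = ∑ j ∈ range m, 2 * (p.eval (w * η ^ j)).re := sum_congr rfl fun j _ => by
          rw [norm_mul, norm_pow, hz, one_pow, mul_one, Complex.norm_real, Real.norm_eq_abs,
            abs_of_nonneg (mul_nonneg zero_le_two (hre _ (hz j)))]
      _ = _ := by rw [← mul_sum, hre_sum]; ring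
  exact le_of_mul_le_mul_left hbound (by exact_mod_cast hm)

theorem Complex.sq_norm_one_add {v : ℂ} (hv : ‖v‖ = 1) : ‖1 + v‖ ^ 2 = 2 * (1 + v).re := by
  have h := Complex.sq_norm v
  rw [hv, Complex.normSq_apply] at h
  rw [Complex.sq_norm, Complex.normSq_apply]
  simp only [Complex.add_re, Complex.one_re, Complex.add_im, Complex.one_im]
  linear_combination -h

theorem Complex.eq_zero_of_forall_norm_mul_add_le {a b : ℂ}
    (h : ∀ v : ℂ, ‖v‖ = 1 → ‖a * v + b‖ ≤ 2 * (1 + v).re) : a = 0 := by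
  have hba : b = a := by
    have h1 := h (-1) (by simp)
    norm_num at h1
    linear_combination h1
  subst hba
  have hle : ∀ t ∈ Set.Ioo 0 Real.pi, ‖b‖ ≤ ‖1 + exp (t * I)‖ := fun t ht => by
    have hv := Complex.norm_exp_ofReal_mul_I t
    have hpos : 0 < ‖1 + exp (t * I)‖ := by
      refine norm_pos_iff.2 fun h0 => (Real.sin_pos_of_pos_of_lt_pi ht.1 ht.2).ne' ?_
      simpa using congrArg Complex.im h0
    have hb := h _ hv
    rw [← Complex.sq_norm_one_add hv, show b * exp (t * I) + b = b * (1 + exp (t * I)) by ring,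
      norm_mul, sq] at hb
    exact le_of_mul_le_mul_right hb hpos
  have hlim : Tendsto (fun t : ℝ => ‖1 + exp (t * I)‖) (𝓝[<] Real.pi) (𝓝 0) := by
    have hcont : Continuous fun t : ℝ => ‖1 + exp (t * I)‖ := by fun_prop
    simpa [Complex.exp_pi_mul_I] using (hcont.tendsto Real.pi).mono_left nhdsWithin_le_nhds
  exact norm_le_zero_iff.1 (ge_of_tendsto hlim (eventually_of_mem (Ioo_mem_nhdsLT Real.pi_pos) hle))

theorem Complex.re_one_add_pos {w : ℂ} (hw : ‖w‖ < 1) : 0 < (1 + w).re := by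
  rw [add_re, one_re]
  linarith [neg_abs_le w.re, abs_re_le_norm w]

theorem Polynomial.coeff_eq_zero_of_forall_re_pos {p : ℂ[X]} {m k : ℕ} (hdeg : p.natDegree ≤ m)
    (h0 : p.coeff 0 = 1) (hm : p.coeff m = 1) (hre : ∀ z : ℂ, ‖z‖ < 1 → 0 < (p.eval z).re)
    (hk0 : 0 < k) (hkm : k < m) : p.coeff k = 0 := by
  have hbdry : ∀ z : ℂ, ‖z‖ = 1 → 0 ≤ (p.eval z).re := fun z hz =>
    nonneg_on_closedBall_of_pos_on_ball (by fun_prop) one_ne_zero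
      (fun y hy => hre y (mem_ball_zero_iff.1 hy)) z (mem_closedBall_zero_iff.2 hz.le)
  refine Complex.eq_zero_of_forall_norm_mul_add_le (b := conj (p.coeff (m - k))) fun v hv => ?_
  simpa [h0, hm] using norm_coeff_mul_add_conj_coeff_le hdeg hk0 hkm hbdry hv

theorem coeff_derivative_eq {n : ℕ} (hn : 2 ≤ n) {a : ℕ → ℂ} {P : ℂ[X]}
    (hP : P = X + (∑ k ∈ Icc 2 (n - 1), C (a k) * X ^ k) + C ((n : ℂ)⁻¹) * X ^ n) (j : ℕ) :
    (derivative P).coeff j =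
      if j = 0 ∨ j = n - 1 then 1 else if j < n - 1 then (j + 1) * a (j + 1) else 0 := by
  have hn0 : (n : ℂ) ≠ 0 := by exact_mod_cast (by omega : n ≠ 0)
  simp only [hP, coeff_derivative, coeff_add, coeff_X, finsetSum_coeff, coeff_C_mul, coeff_X_pow,
    mul_ite, mul_one, mul_zero, sum_ite_eq, mem_Icc]
  split_ifs <;> first | omega | skip
  · simp [show j = 0 by omega]
  · ring
  · rw [add_zero, zero_add, ← Nat.cast_add_one, ‹j + 1 = n›, inv_mul_cancel₀ hn0]
  · simp

/-- For `P(z) = z + a₂ z² + ⋯ + a_{n-1} z^{n-1} + zⁿ/n`, the derivative `P′` has positive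
real part on the open unit disk iff all the middle coefficients vanish. -/
theorem deriv_pos_re_iff_middle_coeffs_vanish (n : ℕ) (hn : 2 ≤ n) (a : ℕ → ℂ)
    (P : Polynomial ℂ)
    (hP : P = X + (∑ k ∈ Finset.Icc 2 (n - 1), C (a k) * X ^ k) + C ((n : ℂ)⁻¹) * X ^ n) :
    (∀ z : ℂ, ‖z‖ < 1 → 0 < ((Polynomial.derivative P).eval z).re) ↔
      (∀ k ∈ Finset.Icc 2 (n - 1), a k = 0) := by
  have hQ := coeff_derivative_eq hn hP
  constructor
  · intro hpos k hk
    rw [mem_Icc] at hk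
    have hdeg : (derivative P).natDegree ≤ n - 1 :=
      natDegree_le_iff_coeff_eq_zero.2 fun j hj => by rw [hQ, if_neg (by omega), if_neg (by omega)]
    have hk' := coeff_eq_zero_of_forall_re_pos hdeg (by simp [hQ]) (by simp [hQ]) hpos
      (k := k - 1) (by omega) (by omega)
    rw [hQ, if_neg (by omega), if_pos (by omega), Nat.sub_add_cancel (by omega : 1 ≤ k)] at hk'
    exact (mul_eq_zero.1 hk').resolve_left (by norm_cast)
  · intro hvanish z hz
    have hQ' : derivative P = 1 + X ^ (n - 1) := by
      ext j
      rw [hQ, coeff_add, coeff_one, coeff_X_pow]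
      split_ifs <;> first | omega | simp [hvanish (j + 1) (mem_Icc.2 ⟨by omega, by omega⟩)] | simp
    rw [hQ', eval_add, eval_one, eval_pow, eval_X]
    exact Complex.re_one_add_pos (by rw [norm_pow]; exact pow_lt_one₀ (norm_nonneg z) hz (by omega))
end

section
/- Let n ≥ 2 and let P(z) = z + zⁿ/n. Then for every z in the open unit disk 𝔻 with z ≠ 0, one has P(z) ≠ 0 and Re( z·P′(z) / P(z) ) > 0. -/
/-!
Writing `w = z^(n-1)`, we get `P(z) = z (1 + w/n)` and `z P′(z) = z (1 + w)`, so the quotient is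
`(1 + w) / (1 + t w)` with `t = 1/n` and `|w| < 1`. For real `|t| ≤ 1` its real part has the sign of
`Re ((1 + w)(1 + t w̄)) = 1 + (1 + t) Re w + t |w|² ≥ (1 - |w|)(1 - t |w|) > 0`.
-/

open Polynomial

section Quotient

variable {w : ℂ} {t : ℝ}

theorem one_add_ofReal_mul_ne_zero (hw : ‖w‖ < 1) (ht : |t| ≤ 1) : 1 + t * w ≠ 0 := by
  intro h
  have hnorm : ‖(t : ℂ) * w‖ = 1 := by
    rw [eq_neg_of_add_eq_zero_right h, norm_neg, norm_one]
  rw [norm_mul, Complex.norm_real, Real.norm_eq_abs] at hnorm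
  nlinarith [abs_nonneg t, norm_nonneg w]

theorem re_one_add_div_one_add_ofReal_mul_pos (hw : ‖w‖ < 1) (ht : |t| ≤ 1) :
    0 < ((1 + w) / (1 + t * w)).re := by
  rw [Complex.div_re, ← add_div]
  refine div_pos ?_ (Complex.normSq_pos.mpr (one_add_ofReal_mul_ne_zero hw ht))
  obtain ⟨ht₁, ht₂⟩ := abs_le.mp ht
  have hre : -‖w‖ ≤ w.re := neg_le_of_abs_le (Complex.abs_re_le_norm w)
  have hfactor : 0 < (1 - ‖w‖) * (1 - t * ‖w‖) :=
    mul_pos (by linarith) (by nlinarith [norm_nonneg w])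
  have hnum : 0 < 1 + (1 + t) * w.re + t * ‖w‖ ^ 2 := by nlinarith
  rw [Complex.sq_norm, Complex.normSq_apply] at hnum
  simp only [Complex.add_re, Complex.add_im, Complex.one_re, Complex.one_im,
    Complex.re_ofReal_mul, Complex.im_ofReal_mul]
  linarith

end Quotient

section Binomial

variable {R : Type*} [CommRing R] (c z : R) {n : ℕ}

theorem eval_X_add_C_mul_X_pow (hn : 1 ≤ n) :
    (X + C c * X ^ n).eval z = z * (1 + c * z ^ (n - 1)) := by
  obtain ⟨m, rfl⟩ := Nat.exists_eq_add_of_le' hn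
  simp only [eval_add, eval_mul, eval_C, eval_pow, eval_X, Nat.add_sub_cancel]
  ring

theorem eval_derivative_X_add_C_mul_X_pow :
    (derivative (X + C c * X ^ n)).eval z = 1 + n * c * z ^ (n - 1) := by
  simp only [derivative_add, derivative_X, derivative_C_mul_X_pow, eval_add, eval_one, eval_C,
    eval_mul, eval_pow, eval_X, map_mul, map_natCast, eval_natCast]
  ring

end Binomial

/-- For `P(z) = z + zⁿ/n` with `n ≥ 2`, at every nonzero point of the open unit disk we have
`P(z) ≠ 0` and `Re (z P′(z) / P(z)) > 0`. -/
theorem starlike_criterion_for_z_add_zpow (n : ℕ) (hn : 2 ≤ n)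
    (P : Polynomial ℂ) (hP : P = X + C ((n : ℂ)⁻¹) * X ^ n) :
    ∀ z : ℂ, ‖z‖ < 1 → z ≠ 0 →
      P.eval z ≠ 0 ∧ 0 < (z * (Polynomial.derivative P).eval z / P.eval z).re := by
  intro z hz hz0
  subst hP
  have hw : ‖z ^ (n - 1)‖ < 1 := by
    rw [norm_pow]
    exact pow_lt_one₀ (norm_nonneg z) hz (by omega)
  have ht : |(n : ℝ)⁻¹| ≤ 1 := by
    rw [abs_inv, Nat.abs_cast]
    exact inv_le_one_of_one_le₀ (by exact_mod_cast (by omega : 1 ≤ n))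
  have hn₀ : (n : ℂ) ≠ 0 := by exact_mod_cast (by omega : n ≠ 0)
  have hc : (n : ℂ)⁻¹ = (((n : ℝ)⁻¹ : ℝ) : ℂ) := by push_cast; rfl
  rw [eval_X_add_C_mul_X_pow _ _ (by omega), eval_derivative_X_add_C_mul_X_pow,
    mul_inv_cancel₀ hn₀, one_mul, mul_div_mul_left _ _ hz0, hc]
  exact ⟨mul_ne_zero hz0 (one_add_ofReal_mul_ne_zero hw ht),
    re_one_add_div_one_add_ofReal_mul_pos hw ht⟩
end

section
/- Let n ≥ 2 and let P(z) = z + zⁿ/n. Then P is injective on the open unit disk 𝔻, and the image P(𝔻) is star-shaped with respect to the origin, i.e., for every w ∈ P(𝔻) and every t ∈ [0,1], the point t·w belongs to P(𝔻). -/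
/-!
Injectivity: if `P a = P b` for distinct `a, b` in the disk, then `n (a - b) = -(aⁿ - bⁿ)`, whereas
`‖aⁿ - bⁿ‖ ≤ n rⁿ⁻¹ ‖a - b‖` with `r = max ‖a‖ ‖b‖ < 1`.

Starlikeness: `Re (conj z · P z / P' z) = |z|² Re ((1 + zⁿ⁻¹/n) / (1 + zⁿ⁻¹)) > 0` on the punctured
disk, so following a ray `s ↦ s • w` outwards, the local inverse of `P` strictly increases in
modulus. Fix `ρ < 1`. If `s • w ∉ P(B_ρ)` for some `s ∈ [0, 1]`, let `σ` be the largest such `s`.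
Then `σ • w = P u` with `‖u‖ = ρ`, and for `s` slightly above `σ` the local inverse gives preimages
of `s • w` of modulus `> ρ`, which by injectivity are the preimages in `B_ρ`: a contradiction.
-/

open Complex Filter Metric Polynomial Set
open scoped ComplexConjugate Topology

theorem norm_pow_sub_pow_le {R : Type*} [NormedCommRing R] [NormOneClass R] {a b : R} {r : ℝ}
    (ha : ‖a‖ ≤ r) (hb : ‖b‖ ≤ r) (n : ℕ) :
    ‖a ^ n - b ^ n‖ ≤ n * r ^ (n - 1) * ‖a - b‖ := by
  have hr : 0 ≤ r := (norm_nonneg a).trans ha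
  have hterm : ∀ i ∈ Finset.range n, ‖a ^ i * b ^ (n - 1 - i)‖ ≤ r ^ (n - 1) := fun i hi => by
    calc ‖a ^ i * b ^ (n - 1 - i)‖ ≤ ‖a‖ ^ i * ‖b‖ ^ (n - 1 - i) :=
          (norm_mul_le _ _).trans (by gcongr <;> exact norm_pow_le _ _)
      _ ≤ r ^ i * r ^ (n - 1 - i) := by gcongr
      _ = r ^ (n - 1) := by rw [← pow_add, Nat.add_sub_cancel' (by simp at hi; omega)]
  rw [← geom_sum₂_mul]
  calc _ ≤ ‖∑ i ∈ Finset.range n, a ^ i * b ^ (n - 1 - i)‖ * ‖a - b‖ := norm_mul_le _ _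
    _ ≤ n * r ^ (n - 1) * ‖a - b‖ := by
      gcongr
      simpa using norm_sum_le_of_le _ hterm

theorem isOpen_image_of_hasStrictDerivAt {𝕜 : Type*} [NontriviallyNormedField 𝕜]
    [CompleteSpace 𝕜] {f f' : 𝕜 → 𝕜} {s : Set 𝕜} (hs : IsOpen s)
    (hf : ∀ x ∈ s, HasStrictDerivAt f (f' x) x) (hf' : ∀ x ∈ s, f' x ≠ 0) :
    IsOpen (f '' s) := by
  refine isOpen_iff_mem_nhds.mpr ?_
  rintro _ ⟨x, hx, rfl⟩
  rw [← (hf x hx).map_nhds_eq (hf' x hx)]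
  exact image_mem_map (hs.mem_nhds hx)

theorem eventually_gt_of_hasDerivAt_pos {φ : ℝ → ℝ} {D σ : ℝ} (hφ : HasDerivAt φ D σ)
    (hD : 0 < D) : ∀ᶠ s in 𝓝[>] σ, φ σ < φ s := by
  filter_upwards [(hφ.tendsto_slope.mono_left (nhdsGT_le_nhdsNE σ)).eventually (lt_mem_nhds hD),
    self_mem_nhdsWithin] with s hslope hs
  exact (slope_pos_iff_of_le (le_of_lt hs)).mp hslope

section Starlike

variable {f : ℂ → ℂ}

theorem eventually_exists_norm_lt_of_hasStrictDerivAt {f' u w : ℂ} {σ : ℝ}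
    (hf : HasStrictDerivAt f f' u) (hf' : f' ≠ 0) (hσ : 0 < σ) (hu : f u = σ • w)
    (hradial : 0 < (conj u * f u / f').re) {U : Set ℂ} (hU : U ∈ 𝓝 u) :
    ∀ᶠ s in 𝓝[>] σ, ∃ v ∈ U, f v = s • w ∧ ‖u‖ < ‖v‖ := by
  set g := hf.localInverse f f' u hf'
  have hline : Continuous fun s : ℝ => s • w := continuous_id.smul continuous_const
  have hg : HasDerivAt (fun s : ℝ => g (s • w)) (f'⁻¹ * w) σ := by
    have hg := (hf.to_localInverse hf').hasDerivAt
    rw [hu] at hg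
    exact (hg.scomp σ ((hasDerivAt_id σ).smul_const w)).congr_deriv (by simp [mul_comm])
  have hgσ : g (σ • w) = u := hu ▸ (hf.eventually_left_inverse hf').self_of_nhds
  -- at `σ`, `d/ds ‖g (s • w)‖² = 2 Re (conj u · w / f') = 2 σ⁻¹ Re (conj u · f u / f')`
  have hpos : 0 < 2 * inner ℝ (g (σ • w)) (f'⁻¹ * w) := by
    have hw : f'⁻¹ * w * conj u = σ⁻¹ • (conj u * f u / f') := by
      rw [hu, real_smul, real_smul, ofReal_inv]
      field_simp [ofReal_ne_zero.mpr hσ.ne']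
    rw [hgσ, Complex.inner, hw, smul_re]
    exact mul_pos two_pos (mul_pos (inv_pos.mpr hσ) hradial)
  have hright : ∀ᶠ s in 𝓝 σ, f (g (s • w)) = s • w :=
    hline.continuousAt.tendsto.eventually (hu ▸ hf.eventually_right_inverse hf')
  filter_upwards [eventually_gt_of_hasDerivAt_pos hg.norm_sq hpos,
    nhdsWithin_le_nhds ((hgσ ▸ hg.continuousAt.tendsto).eventually hU),
    nhdsWithin_le_nhds hright] with s hnorm hsU hsf
  rw [hgσ] at hnorm
  exact ⟨_, hsU, hsf, lt_of_pow_lt_pow_left₀ 2 (norm_nonneg _) hnorm⟩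

variable {f' : ℂ → ℂ} {R : ℝ}

theorem starConvex_image_ball_of_lt {ρ : ℝ} (hρR : ρ < R) (hinj : InjOn f (ball 0 R))
    (hf : ∀ u ∈ ball (0 : ℂ) R, HasStrictDerivAt f (f' u) u)
    (hf' : ∀ u ∈ ball (0 : ℂ) R, f' u ≠ 0) (hf0 : f 0 = 0)
    (hradial : ∀ u ∈ ball (0 : ℂ) R, u ≠ 0 → 0 < (conj u * f u / f' u).re) :
    StarConvex ℝ 0 (f '' ball 0 ρ) := by
  have hball : ball (0 : ℂ) ρ ⊆ ball 0 R := ball_subset_ball hρR.le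
  have hopen : IsOpen (f '' ball 0 ρ) := isOpen_image_of_hasStrictDerivAt isOpen_ball
    (fun u hu => hf u (hball hu)) (fun u hu => hf' u (hball hu))
  have hclosed : IsClosed (f '' closedBall 0 ρ) :=
    ((isCompact_closedBall 0 ρ).image_of_continuousOn fun u hu =>
      (hf u (closedBall_subset_ball hρR hu)).hasDerivAt.continuousAt.continuousWithinAt).isClosed
  rw [starConvex_zero_iff]
  intro w hw
  have hline : Continuous fun s : ℝ => s • w := continuous_id.smul continuous_const
  by_contra! hbad
  obtain ⟨σ, ⟨⟨hσ0, hσ1⟩, hσbad⟩, hσmax⟩ :=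
    (isCompact_Icc.inter_right (hopen.isClosed_compl.preimage hline)).exists_isGreatest
      (let ⟨a, ha0, ha1, ha⟩ := hbad; ⟨a, ⟨ha0, ha1⟩, ha⟩)
  have hgood : ∀ s ∈ Ioc σ 1, s • w ∈ f '' ball 0 ρ := fun s ⟨hσs, hs1⟩ => by
    by_contra h
    exact (hσmax ⟨⟨hσ0.trans hσs.le, hs1⟩, h⟩).not_gt hσs
  have hσ1' : σ < 1 := hσ1.lt_of_ne fun h => hσbad (by simpa [h] using hw)
  obtain ⟨u, hu, hfu⟩ : σ • w ∈ f '' closedBall 0 ρ := by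
    have : Ioc σ 1 ⊆ (fun s : ℝ => s • w) ⁻¹' (f '' closedBall 0 ρ) :=
      fun s hs => image_mono ball_subset_closedBall (hgood s hs)
    refine (hclosed.preimage hline).closure_subset_iff.mpr this ?_
    rw [closure_Ioc hσ1'.ne]
    exact ⟨le_rfl, hσ1⟩
  have hρ : 0 < ρ := let ⟨_, hz, _⟩ := hw; pos_of_mem_ball hz
  have hnorm_u : ‖u‖ = ρ := (mem_closedBall_zero_iff.mp hu).antisymm
    (not_lt.mp fun h => hσbad ⟨u, mem_ball_zero_iff.mpr h, hfu⟩)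
  have hu0 : u ≠ 0 := norm_pos_iff.mp (hnorm_u ▸ hρ)
  have hσpos : 0 < σ :=
    hσ0.lt_of_ne fun h => hσbad ⟨0, mem_ball_self hρ, by simp [← h, hf0]⟩
  have huR : u ∈ ball (0 : ℂ) R := closedBall_subset_ball hρR hu
  obtain ⟨s, ⟨v, hvR, hfv, hv⟩, hs⟩ := ((eventually_exists_norm_lt_of_hasStrictDerivAt
    (hf u huR) (hf' u huR) hσpos hfu (hradial u huR hu0) (isOpen_ball.mem_nhds huR)).and
    (Ioc_mem_nhdsGT hσ1')).exists
  obtain ⟨v', hv', hfv'⟩ := hgood s hs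
  rw [← hinj (hball hv') hvR (hfv'.trans hfv.symm), hnorm_u] at hv
  exact (mem_ball_zero_iff.mp hv').not_gt hv

theorem starConvex_image_ball (hinj : InjOn f (ball 0 R))
    (hf : ∀ u ∈ ball (0 : ℂ) R, HasStrictDerivAt f (f' u) u)
    (hf' : ∀ u ∈ ball (0 : ℂ) R, f' u ≠ 0) (hf0 : f 0 = 0)
    (hradial : ∀ u ∈ ball (0 : ℂ) R, u ≠ 0 → 0 < (conj u * f u / f' u).re) :
    StarConvex ℝ 0 (f '' ball 0 R) := by
  rw [starConvex_zero_iff]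
  rintro _ ⟨z, hz, rfl⟩ t ht0 ht1
  obtain ⟨ρ, hzρ, hρR⟩ := exists_between (mem_ball_zero_iff.mp hz)
  exact image_mono (ball_subset_ball hρR.le) <|
    (starConvex_image_ball_of_lt hρR hinj hf hf' hf0 hradial).smul_mem
      (mem_image_of_mem f (mem_ball_zero_iff.mpr hzρ)) ht0 ht1

end Starlike

theorem re_one_add_mul_div_one_add_pos {c : ℝ} (hc0 : 0 < c) (hc1 : c ≤ 1) {v : ℂ}
    (hv : ‖v‖ < 1) : 0 < ((1 + c * v) / (1 + v)).re := by
  have hre : 0 < (1 + v).re := by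
    rw [add_re, one_re]
    linarith [neg_le_of_abs_le (abs_re_le_norm v)]
  have hv1 : 1 + v ≠ 0 := fun h => by simp [h] at hre
  have hsplit : (1 + c * v) / (1 + v) = c + ((1 - c : ℝ) : ℂ) * (1 + v)⁻¹ := by
    push_cast
    field_simp
    ring
  rw [hsplit, add_re, ofReal_re, re_ofReal_mul, inv_re]
  have : 0 ≤ (1 + v).re / normSq (1 + v) := div_nonneg hre.le (normSq_nonneg _)
  nlinarith

section AddInvMulPow

variable {n : ℕ}

theorem injOn_add_inv_mul_pow (hn : 2 ≤ n) :
    InjOn (fun z : ℂ => z + (n : ℂ)⁻¹ * z ^ n) (ball 0 1) := by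
  intro a ha b hb hab
  by_contra hne
  set r := max ‖a‖ ‖b‖
  have hr : r < 1 := max_lt (mem_ball_zero_iff.mp ha) (mem_ball_zero_iff.mp hb)
  have hn0 : (n : ℂ) ≠ 0 := by exact_mod_cast (by omega : n ≠ 0)
  have hpow : a ^ n - b ^ n = -n * (a - b) := by
    field_simp at hab
    linear_combination hab
  have hlt : r ^ (n - 1) < 1 := pow_lt_one₀ (by positivity) hr (by omega)
  have hab0 : 0 < ‖a - b‖ := norm_pos_iff.mpr (sub_ne_zero.mpr hne)
  have hbound := norm_pow_sub_pow_le (le_max_left ‖a‖ ‖b‖) (le_max_right _ _) n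
  rw [hpow, norm_mul, norm_neg, norm_natCast] at hbound
  have hnpos : (0 : ℝ) < n := by positivity
  nlinarith [mul_pos hnpos hab0]

theorem hasStrictDerivAt_add_inv_mul_pow (hn : n ≠ 0) (z : ℂ) :
    HasStrictDerivAt (fun z : ℂ => z + (n : ℂ)⁻¹ * z ^ n) (1 + z ^ (n - 1)) z :=
  ((hasStrictDerivAt_id z).add ((hasStrictDerivAt_pow n z).const_mul (n : ℂ)⁻¹)).congr_deriv
    (by field_simp)

theorem norm_pow_sub_one_lt_one (hn : 2 ≤ n) {z : ℂ} (hz : ‖z‖ < 1) : ‖z ^ (n - 1)‖ < 1 := by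
  rw [norm_pow]
  exact pow_lt_one₀ (norm_nonneg z) hz (by omega)

theorem one_add_pow_sub_one_ne_zero (hn : 2 ≤ n) {z : ℂ} (hz : ‖z‖ < 1) :
    1 + z ^ (n - 1) ≠ 0 := by
  intro h
  have := norm_pow_sub_one_lt_one hn hz
  rw [eq_neg_of_add_eq_zero_right h, norm_neg, norm_one] at this
  exact lt_irrefl _ this

theorem re_conj_mul_add_inv_mul_pow_div_pos (hn : 2 ≤ n) {z : ℂ} (hz : ‖z‖ < 1)
    (hz0 : z ≠ 0) : 0 < (conj z * (z + (n : ℂ)⁻¹ * z ^ n) / (1 + z ^ (n - 1))).re := by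
  have hfactor : conj z * (z + (n : ℂ)⁻¹ * z ^ n) / (1 + z ^ (n - 1)) =
      normSq z * ((1 + ((n : ℝ)⁻¹ : ℝ) * z ^ (n - 1)) / (1 + z ^ (n - 1))) := by
    obtain ⟨m, rfl⟩ : ∃ m, n = m + 1 := ⟨n - 1, by omega⟩
    rw [Nat.add_sub_cancel, pow_succ', ← mul_conj]
    push_cast
    ring
  rw [hfactor, re_ofReal_mul]
  exact mul_pos (normSq_pos.mpr hz0) (re_one_add_mul_div_one_add_pos (by positivity)
    (inv_le_one_of_one_le₀ (by exact_mod_cast (by omega : 1 ≤ n)))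
    (norm_pow_sub_one_lt_one hn hz))

end AddInvMulPow

/-- For `P(z) = z + zⁿ/n` with `n ≥ 2`, `P` is injective on the open unit disk and its image
there is star-shaped with respect to the origin. -/
theorem z_add_zpow_injective_and_starlike (n : ℕ) (hn : 2 ≤ n)
    (P : Polynomial ℂ) (hP : P = X + C ((n : ℂ)⁻¹) * X ^ n) :
    Set.InjOn (fun z => P.eval z) (Metric.ball (0 : ℂ) 1) ∧
      ∀ w ∈ (fun z => P.eval z) '' Metric.ball (0 : ℂ) 1, ∀ t : ℝ, t ∈ Set.Icc (0 : ℝ) 1 →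
        (t : ℂ) * w ∈ (fun z => P.eval z) '' Metric.ball (0 : ℂ) 1 := by
  have hP_eval : (fun z => P.eval z) = fun z : ℂ => z + (n : ℂ)⁻¹ * z ^ n := by
    funext z
    simp [hP]
  have hstar := starConvex_image_ball (injOn_add_inv_mul_pow hn)
    (fun z _ => hasStrictDerivAt_add_inv_mul_pow (by omega) z)
    (fun z hz => one_add_pow_sub_one_ne_zero hn (mem_ball_zero_iff.mp hz))
    (by simp [show n ≠ 0 by omega])
    (fun z hz hz0 => re_conj_mul_add_inv_mul_pow_div_pos hn (mem_ball_zero_iff.mp hz) hz0)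
  rw [hP_eval]
  refine ⟨injOn_add_inv_mul_pow hn, fun w hw t ht => ?_⟩
  rw [← real_smul]
  exact hstar.smul_mem hw ht.1 ht.2
end

section
/- Let P be a nonconstant complex polynomial that is injective on the open unit disk 𝔻, and let α ∈ ℂ with |α| = 1 be such that P′(α) = 0. Then P″(α) ≠ 0; that is, every critical point of P lying on the unit circle is a simple zero of P′. -/
/-!
If `P'(α) = P''(α) = 0`, then `P - P(α)` vanishes to some order `k ≥ 3` at `α`, so near `α`
we can write `P = P(α) + h^k` with `h` a local biholomorphism, `h(α) = 0`. Pull back by `h` the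
two rays from `0` in the directions `α h'(α) (-e^{± iπ/k})`: they have the same image under
`w ↦ w^k`, and since `cos (π/k) > 0` both preimages enter the unit disk at `α`. Two distinct
points of the disk thus have the same value under `P`.
-/

open Polynomial

open Filter Metric
open scoped Topology ComplexConjugate

theorem eventually_norm_lt_of_inner_deriv_neg {E : Type*} [NormedAddCommGroup E]
    [InnerProductSpace ℝ E] {γ : ℝ → E} {v : E} {x : ℝ} (hγ : HasDerivAt γ v x)
    (hv : inner ℝ (γ x) v < 0) : ∀ᶠ t in 𝓝[>] x, ‖γ t‖ < ‖γ x‖ := by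
  have hslope := hγ.norm_sq.hasDerivWithinAt.limsup_slope_le' (lt_irrefl x)
    (by linarith : 2 * inner ℝ (γ x) v < 0)
  filter_upwards [hslope, self_mem_nhdsWithin] with t hslope (ht : x < t)
  rw [slope_def_field, div_neg_iff] at hslope
  refine lt_of_pow_lt_pow_left₀ 2 (norm_nonneg _) ?_
  rcases hslope with ⟨-, h⟩ | ⟨h, -⟩ <;> linarith

theorem eventually_norm_comp_ofReal_mul_lt {ψ : ℂ → ℂ} {d c : ℂ} (hψ : HasDerivAt ψ d 0)
    (hc : (c * d * conj (ψ 0)).re < 0) : ∀ᶠ t : ℝ in 𝓝[>] 0, ‖ψ (t * c)‖ < ‖ψ 0‖ := by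
  have hψ₀ : HasDerivAt ψ d ((0 : ℂ) * c) := by rwa [zero_mul]
  have hray : HasDerivAt (fun w => ψ (w * c)) (d * c) ((0 : ℝ) : ℂ) := by
    rw [Complex.ofReal_zero]; exact hψ₀.comp 0 (hasDerivAt_mul_const c)
  refine (eventually_norm_lt_of_inner_deriv_neg hray.comp_ofReal ?_).mono fun t ht => ?_
  · simpa [Complex.inner, mul_comm d c] using hc
  · simpa using ht

theorem exists_hasStrictDerivAt_pow_eq {f : ℂ → ℂ} {f' a : ℂ} {k : ℕ}
    (hf : HasStrictDerivAt f f' a) (ha : f a ≠ 0) (hk : k ≠ 0) :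
    ∃ F c, HasStrictDerivAt F c a ∧ F a ≠ 0 ∧ ∀ z, F z ^ k = f z := by
  have hslit : f a / f a ∈ Complex.slitPlane := by
    rw [div_self ha]; exact Complex.one_mem_slitPlane
  refine ⟨fun z => f a ^ (k⁻¹ : ℂ) * (f z / f a) ^ (k⁻¹ : ℂ), _,
    ((hf.div_const (f a)).cpow_const hslit).const_mul _, by simp [ha], fun z => ?_⟩
  rw [mul_pow, Complex.cpow_nat_inv_pow _ hk, Complex.cpow_nat_inv_pow _ hk]
  field_simp

theorem exists_hasStrictDerivAt_sub_pow_mul_eq_pow {g : ℂ → ℂ} {g' a : ℂ} {k : ℕ}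
    (hg : HasStrictDerivAt g g' a) (ha : g a ≠ 0) (hk : k ≠ 0) :
    ∃ h β, β ≠ 0 ∧ HasStrictDerivAt h β a ∧ h a = 0 ∧ ∀ z, (z - a) ^ k * g z = h z ^ k := by
  obtain ⟨F, c, hF, hFa, hFk⟩ := exists_hasStrictDerivAt_pow_eq hg ha hk
  refine ⟨fun z => (z - a) * F z, F a, hFa, ?_, by simp, fun z => by rw [mul_pow, hFk]⟩
  simpa using ((hasStrictDerivAt_id a).fun_sub (hasStrictDerivAt_const a a)).fun_mul hF

theorem Polynomial.exists_hasStrictDerivAt_eval_eq_pow {Q : ℂ[X]} {a : ℂ} (hQ : Q ≠ 0)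
    (ha : Q.IsRoot a) : ∃ h β, β ≠ 0 ∧ HasStrictDerivAt h β a ∧ h a = 0 ∧
      ∀ z, Q.eval z = h z ^ Q.rootMultiplicity a := by
  obtain ⟨g, hQg, hg⟩ := Q.exists_eq_pow_rootMultiplicity_mul_and_not_dvd hQ a
  rw [dvd_iff_isRoot] at hg
  obtain ⟨h, β, hβ, hh, ha, hpow⟩ := exists_hasStrictDerivAt_sub_pow_mul_eq_pow
    (g.hasStrictDerivAt a) hg ((rootMultiplicity_pos hQ).2 ha).ne'
  refine ⟨h, β, hβ, hh, ha, fun z => ?_⟩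
  rw [← hpow]
  conv_lhs => rw [hQg]
  simp

theorem exists_ne_pow_eq_of_re_neg {k : ℕ} (hk : 3 ≤ k) :
    ∃ ζ₀ ζ₁ : ℂ, ζ₀ ≠ ζ₁ ∧ ζ₀ ^ k = ζ₁ ^ k ∧ ζ₀.re < 0 ∧ ζ₁.re < 0 := by
  set θ := Real.pi / k
  have hθ : 0 < θ := div_pos Real.pi_pos (by positivity)
  have hθ3 : θ ≤ Real.pi / 3 := div_le_div_of_nonneg_left Real.pi_pos.le (by norm_num)
    (by exact_mod_cast hk)
  have hcos : 0 < Real.cos θ := Real.cos_pos_of_mem_Ioo ⟨by linarith, by linarith [Real.pi_pos]⟩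
  have hsin : 0 < Real.sin θ := Real.sin_pos_of_pos_of_lt_pi hθ (by linarith [Real.pi_pos])
  have hkθ : (k : ℂ) * θ = Real.pi := by
    have : (k : ℂ) ≠ 0 := by exact_mod_cast (by omega : k ≠ 0)
    simp only [θ]; push_cast; field_simp
  refine ⟨-Complex.exp (θ * Complex.I), -Complex.exp (-θ * Complex.I), fun h => ?_, ?_, ?_, ?_⟩
  · have := congrArg Complex.im h
    simp [Complex.exp_im] at this
    linarith
  · rw [neg_pow (Complex.exp _), neg_pow (Complex.exp _), ← Complex.exp_nat_mul,
      ← Complex.exp_nat_mul, ← mul_assoc, ← mul_assoc, mul_neg, hkθ, Complex.exp_pi_mul_I,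
      neg_mul, Complex.exp_neg_pi_mul_I]
  · simpa [Complex.exp_re] using hcos
  · simpa [Complex.exp_re] using hcos

theorem exists_ne_mem_ball_pow_eq {h : ℂ → ℂ} {β a : ℂ} {k : ℕ} (hh : HasStrictDerivAt h β a)
    (hβ : β ≠ 0) (ha0 : h a = 0) (ha : ‖a‖ = 1) (hk : 3 ≤ k) :
    ∃ z₀ ∈ ball (0 : ℂ) 1, ∃ z₁ ∈ ball (0 : ℂ) 1, z₀ ≠ z₁ ∧ h z₀ ^ k = h z₁ ^ k := by
  obtain ⟨ζ₀, ζ₁, hne, hpow, hre₀, hre₁⟩ := exists_ne_pow_eq_of_re_neg hk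
  set ψ := HasStrictDerivAt.localInverse h β a hh hβ
  have hψ0 : ψ 0 = a := by
    simpa [ha0] using (hh.hasStrictFDerivAt_equiv hβ).localInverse_apply_image
  have hψ : HasDerivAt ψ β⁻¹ 0 := by simpa [ha0] using (hh.to_localInverse hβ).hasDerivAt
  have hright : ∀ᶠ y in 𝓝 0, h (ψ y) = y := by simpa [ha0] using hh.eventually_right_inverse hβ
  have hray : ∀ ζ : ℂ, ζ.re < 0 → ∀ᶠ t : ℝ in 𝓝[>] 0,
      ψ (t * (a * β * ζ)) ∈ ball 0 1 ∧ h (ψ (t * (a * β * ζ))) = t * (a * β * ζ) := by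
    intro ζ hζ
    have hdir : (a * β * ζ * β⁻¹ * conj (ψ 0)).re < 0 := by
      have hnorm : a * conj a = 1 := by
        rw [Complex.mul_conj, Complex.normSq_eq_norm_sq, ha]; norm_num
      rwa [hψ0, show a * β * ζ * β⁻¹ * conj a = ζ * (a * conj a) * (β * β⁻¹) by ring, hnorm,
        mul_inv_cancel₀ hβ, mul_one, mul_one]
    have hto : Tendsto (fun t : ℝ => (t : ℂ) * (a * β * ζ)) (𝓝[>] 0) (𝓝 0) := by
      simpa using ((Complex.continuous_ofReal.mul_const _).tendsto 0).mono_left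
        nhdsWithin_le_nhds
    filter_upwards [eventually_norm_comp_ofReal_mul_lt hψ hdir, hto.eventually hright]
      with t hnorm hinv
    exact ⟨by simpa [hψ0, ha] using hnorm, hinv⟩
  obtain ⟨t, ⟨⟨hz₀, hh₀⟩, ⟨hz₁, hh₁⟩⟩, ht⟩ :=
    (((hray ζ₀ hre₀).and (hray ζ₁ hre₁)).and self_mem_nhdsWithin).exists
  refine ⟨_, hz₀, _, hz₁, fun heq => hne ?_, by rw [hh₀, hh₁]; simp only [mul_pow, hpow]⟩
  have himage := congrArg h heq
  rw [hh₀, hh₁] at himage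
  have ha_ne : a ≠ 0 := by rintro rfl; simp at ha
  have ht_ne : (t : ℂ) ≠ 0 := by exact_mod_cast ht.ne'
  exact mul_left_cancel₀ (mul_ne_zero (mul_ne_zero ht_ne ha_ne) hβ) (by linear_combination himage)

/-- A critical point of a nonconstant polynomial, injective on the open unit disk,
that lies on the unit circle is a simple zero of the derivative. -/
theorem critical_point_on_circle_is_simple (P : Polynomial ℂ)
    (hdeg : 0 < P.natDegree)
    (hinj : Set.InjOn (fun z => P.eval z) (Metric.ball (0 : ℂ) 1))
    (α : ℂ) (hα : ‖α‖ = 1) (hcrit : (Polynomial.derivative P).eval α = 0) :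
    (Polynomial.derivative (Polynomial.derivative P)).eval α ≠ 0 := by
  intro hcrit2
  set Q := P - C (P.eval α)
  have hQ : Q ≠ 0 := fun hQ0 => by
    rw [sub_eq_zero.mp hQ0, natDegree_C] at hdeg
    exact hdeg.false
  have hk : 3 ≤ Q.rootMultiplicity α := lt_rootMultiplicity_of_isRoot_iterate_derivative hQ
    fun m hm => by interval_cases m <;> simp [Q, hcrit, hcrit2]
  obtain ⟨h, β, hβ, hh, hα0, hQh⟩ := exists_hasStrictDerivAt_eval_eq_pow hQ (a := α) (by simp [Q])
  obtain ⟨z₀, hz₀, z₁, hz₁, hne, heq⟩ := exists_ne_mem_ball_pow_eq hh hβ hα0 hα hk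
  refine hne (hinj hz₀ hz₁ ?_)
  have hP : ∀ z, P.eval z = h z ^ Q.rootMultiplicity α + P.eval α := fun z => by
    rw [← hQh]; simp [Q]
  change P.eval z₀ = P.eval z₁
  rw [hP z₀, hP z₁, heq]
end
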